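/- arXiv:2307.11849 — 3 statements merged into one kernel-verified Lean document; each statement's English description precedes it below -/
import Mathlib

section
/- Let L = Q(√m) be an imaginary quadratic field with m squarefree, m < 0, and m ≢ 1 (mod 4). Then the minimum of the absolute multiplicative Weil height H(α) over algebraic integers α ∈ O_L with L = Q(α) equals (1/2)|Δ_L|^{1/2}, where Δ_L = 4m. -/
open NumberField

/-- `c_K = (2/π)^{s/d} |Δ_K|^{1/(2d)}`. -/
noncomputable def minkowskiConst (K : Type*) [Field K] [NumberField K] : ℝ :=
  (2 / Real.pi) ^ ((InfinitePlace.nrComplexPlaces K : ℝ) / (Module.finrank ℚ K)) *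
    |(discr K : ℝ)| ^ ((1 : ℝ) / (2 * (Module.finrank ℚ K : ℝ)))

/-- Absolute multiplicative Weil height of an algebraic integer of `K`. -/
noncomputable def intHeight {K : Type*} [Field K] [NumberField K] (α : K) : ℝ :=
  (∏ φ : K →+* ℂ, max 1 ‖φ α‖) ^ ((Module.finrank ℚ K : ℝ)⁻¹)

/-- The normalized absolute value `|·|_v = ‖·‖_v^{d_v/d}` at an infinite place. -/
noncomputable def placeNorm {K : Type*} [Field K] [NumberField K]
    (v : InfinitePlace K) (α : K) : ℝ :=
  (v α) ^ ((v.mult : ℝ) / (Module.finrank ℚ K : ℝ))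

/-!
Write `α = p + q√m` with `p q : ℚ`. If `α` is an integral generator, then `q ≠ 0`, so the minimal
polynomial of `α` is `X² - 2pX + (p² - mq²)` and has integer coefficients; as `m` is squarefree
and `m ≡ 2, 3 (mod 4)`, this forces `q ∈ ℤ`. Both complex embeddings send `α` to a number of
absolute value `√(p² - mq²) ≥ √(-m) ≥ 1`, hence `H(α) = √(p² - mq²) ≥ √(-m) = ½|Δ_L|^{1/2}`,
with equality at `α = √m`.
-/

open Polynomial

lemma Squarefree.exists_intCast_eq_of_mul_sq {m : ℤ} (hm : Squarefree m) {u : ℚ}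
    (h : ∃ n : ℤ, (n : ℚ) = m * u ^ 2) : ∃ c : ℤ, (c : ℚ) = u := by
  obtain ⟨n, hn⟩ := h
  have hnum : m * u.num ^ 2 = n * (u.den : ℤ) ^ 2 := by
    have hden : (u.den : ℚ) ≠ 0 := by exact_mod_cast u.den_ne_zero
    have hu : (u.num : ℚ) = u * u.den := by rw [← div_eq_iff hden, Rat.num_div_den]
    exact_mod_cast (by rw [hu, hn]; ring : (m : ℚ) * (u.num : ℚ) ^ 2 = n * (u.den : ℚ) ^ 2)
  have hcop : IsCoprime (u.den : ℤ) u.num := by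
    rw [Int.isCoprime_iff_gcd_eq_one, Int.gcd_comm]
    exact u.reduced
  have hdvd : (u.den : ℤ) ^ 2 ∣ m :=
    (hcop.pow (m := 2) (n := 2)).dvd_of_dvd_mul_right ⟨n, by rw [hnum]; ring⟩
  have hunit : IsUnit (u.den : ℤ) := hm _ (by rwa [← sq])
  rw [Int.isUnit_iff] at hunit
  have hden1 : u.den = 1 := by omega
  exact ⟨u.num, by rw [← Rat.num_div_den u, hden1]; simp⟩

lemma Squarefree.emod_four_eq_two_or_three {m : ℤ} (hm : Squarefree m) (hmod : m % 4 ≠ 1) :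
    m % 4 = 2 ∨ m % 4 = 3 := by
  have h4 : ¬ (2 * 2 : ℤ) ∣ m := fun h ↦ by
    have := Int.isUnit_iff.mp (hm 2 h)
    omega
  omega

lemma Int.even_of_mul_sq_eq_sq_sub_four_mul {m c t n : ℤ} (hm : m % 4 = 2 ∨ m % 4 = 3)
    (h : m * c ^ 2 = t ^ 2 - 4 * n) : Even c := by
  by_contra hc
  obtain ⟨j, rfl⟩ := Int.not_even_iff_odd.mp hc
  rcases Int.even_or_odd' t with ⟨k, rfl | rfl⟩
  · have : m = 4 * (k ^ 2 - n - m * j ^ 2 - m * j) := by linear_combination h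
    omega
  · have : m = 4 * (k ^ 2 + k - n - m * j ^ 2 - m * j) + 1 := by linear_combination h
    omega

lemma Squarefree.exists_intCast_eq_of_trace_norm {m : ℤ} (hm : Squarefree m) (hmod : m % 4 ≠ 1)
    {p q : ℚ} (htr : ∃ t : ℤ, (t : ℚ) = 2 * p) (hnorm : ∃ n : ℤ, (n : ℚ) = p ^ 2 - m * q ^ 2) :
    ∃ c : ℤ, (c : ℚ) = q := by
  obtain ⟨t, ht⟩ := htr
  obtain ⟨n, hn⟩ := hnorm
  obtain ⟨c, hc⟩ := hm.exists_intCast_eq_of_mul_sq (u := 2 * q)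
    ⟨t ^ 2 - 4 * n, by push_cast; rw [ht, hn]; ring⟩
  have hmc : m * c ^ 2 = t ^ 2 - 4 * n := by
    exact_mod_cast (by rw [hc, ht, hn]; ring : (m : ℚ) * c ^ 2 = t ^ 2 - 4 * n)
  obtain ⟨d, rfl⟩ :=
    (Int.even_of_mul_sq_eq_sq_sub_four_mul (hm.emod_four_eq_two_or_three hmod) hmc).two_dvd
  exact ⟨d, by push_cast at hc; linarith⟩

section QuadraticExtension

variable {F K : Type*} [Field F] [Field K] [Algebra F K] {x : K}

lemma notMem_range_algebraMap_of_sq_eq [LinearOrder F] [IsStrictOrderedRing F] {c : F}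
    (hc : c < 0) (hx : x ^ 2 = algebraMap F K c) : x ∉ (algebraMap F K).range := by
  rintro ⟨a, rfl⟩
  rw [← map_pow, (algebraMap F K).injective.eq_iff] at hx
  nlinarith [sq_nonneg a]

lemma notMem_range_algebraMap_of_adjoin_eq_top (hK : Module.finrank F K ≠ 1)
    (htop : IntermediateField.adjoin F {x} = ⊤) : x ∉ (algebraMap F K).range := by
  rintro ⟨a, rfl⟩
  rw [IntermediateField.adjoin_simple_eq_bot_iff.mpr (IntermediateField.algebraMap_mem _ a),
    IntermediateField.bot_eq_top_iff_finrank_eq_one] at htop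
  exact hK htop

lemma minpoly_eq_of_aeval_quadratic (hx : x ∉ (algebraMap F K).range) {t n : F}
    (h : aeval x (X ^ 2 - C t * X + C n) = 0) : minpoly F x = X ^ 2 - C t * X + C n := by
  have hint : IsIntegral F x := ⟨_, by monicity!, h⟩
  rw [← minpoly.two_le_natDegree_iff hint] at hx
  refine (eq_of_monic_of_dvd_of_natDegree_le (minpoly.monic hint) (by monicity!)
    (minpoly.dvd F x h) ?_).symm
  compute_degree!

lemma finrank_eq_two_of_adjoin_eq_top (hx : x ∉ (algebraMap F K).range) {t n : F}
    (h : aeval x (X ^ 2 - C t * X + C n) = 0) (htop : IntermediateField.adjoin F {x} = ⊤) :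
    Module.finrank F K = 2 := by
  have hint : IsIntegral F x := ⟨_, by monicity!, h⟩
  rw [← IntermediateField.finrank_top', ← htop, IntermediateField.adjoin.finrank hint,
    minpoly_eq_of_aeval_quadratic hx h]
  compute_degree!

lemma linearIndependent_one_of_notMem_range (hx : x ∉ (algebraMap F K).range) :
    LinearIndependent F ![1, x] := by
  refine LinearIndependent.pair_iff.mpr fun s t hst ↦ ?_
  rw [Algebra.smul_def, Algebra.smul_def, mul_one] at hst
  obtain rfl : t = 0 := by
    by_contra ht
    refine hx ⟨-(s / t), ?_⟩
    have ht' : algebraMap F K t ≠ 0 := by simpa using ht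
    rw [map_neg, map_div₀, neg_eq_iff_eq_neg, div_eq_iff ht']
    linear_combination hst
  simpa using hst

lemma exists_eq_add_mul_of_finrank_eq_two (hx : x ∉ (algebraMap F K).range)
    (hK : Module.finrank F K = 2) (y : K) :
    ∃ p q : F, y = algebraMap F K p + algebraMap F K q * x := by
  have hspan := (linearIndependent_one_of_notMem_range hx).span_eq_top_of_card_eq_finrank
    (by simp [hK])
  have hy : y ∈ Submodule.span F {1, x} := by
    rw [← Matrix.range_cons_cons_empty, hspan]
    trivial
  obtain ⟨p, q, hpq⟩ := Submodule.mem_span_pair.mp hy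
  exact ⟨p, q, by rw [← hpq, Algebra.smul_def, Algebra.smul_def, mul_one]⟩

end QuadraticExtension

lemma aeval_add_mul_of_sq_eq {F K : Type*} [CommRing F] [CommRing K] [Algebra F K] {r : K}
    {m : F} (hr : r ^ 2 = algebraMap F K m) (p q : F) :
    aeval (algebraMap F K p + algebraMap F K q * r)
      (X ^ 2 - C (2 * p) * X + C (p ^ 2 - m * q ^ 2)) = 0 := by
  simp only [map_add, map_sub, map_mul, map_pow, aeval_X, aeval_C, map_ofNat]
  linear_combination (algebraMap F K q) ^ 2 * hr

lemma exists_intCast_eq_coeff_minpoly {K : Type*} [Field K] [CharZero K] {x : K}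
    (hx : IsIntegral ℤ x) (i : ℕ) : ∃ z : ℤ, (z : ℚ) = (minpoly ℚ x).coeff i :=
  ⟨(minpoly ℤ x).coeff i, by
    rw [minpoly.isIntegrallyClosed_eq_field_fractions' ℚ hx, coeff_map, eq_intCast]⟩

lemma Squarefree.exists_intCast_eq_of_isIntegral {K : Type*} [Field K] [CharZero K] {m : ℤ}
    (hm : Squarefree m) (hmod : m % 4 ≠ 1) {r : K} (hr : r ^ 2 = algebraMap ℚ K m) {p q : ℚ}
    (hx : algebraMap ℚ K p + algebraMap ℚ K q * r ∉ (algebraMap ℚ K).range)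
    (hint : IsIntegral ℤ (algebraMap ℚ K p + algebraMap ℚ K q * r)) : ∃ c : ℤ, (c : ℚ) = q := by
  have hmin := minpoly_eq_of_aeval_quadratic hx (aeval_add_mul_of_sq_eq hr p q)
  refine hm.exists_intCast_eq_of_trace_norm hmod (p := p) ?_ ?_
  · obtain ⟨t, ht⟩ := exists_intCast_eq_coeff_minpoly hint 1
    rw [hmin] at ht
    simp only [coeff_add, coeff_sub, coeff_X_pow, OfNat.one_ne_ofNat, ↓reduceIte, coeff_mul_X,
      coeff_C_zero, zero_sub, coeff_C_succ, add_zero] at ht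
    exact ⟨-t, by push_cast; linarith⟩
  · obtain ⟨n, hn⟩ := exists_intCast_eq_coeff_minpoly hint 0
    rw [hmin] at hn
    exact ⟨n, by simpa [coeff_X_pow, coeff_C_mul_X, -map_sub, -map_mul, -map_pow] using hn⟩

lemma Complex.sq_norm_add_mul_of_sq_eq {z : ℂ} {a : ℝ} (ha : a ≤ 0) (hz : z ^ 2 = a) (p q : ℝ) :
    ‖(p : ℂ) + q * z‖ ^ 2 = p ^ 2 - a * q ^ 2 := by
  have hre : z.re ^ 2 - z.im ^ 2 = a := by simpa [sq] using congrArg Complex.re hz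
  have him : z.re * z.im = 0 := by
    have := congrArg Complex.im hz
    simp only [sq, Complex.mul_im, Complex.ofReal_im] at this
    linarith
  have hre0 : z.re = 0 := by
    rcases mul_eq_zero.mp him with h | h
    · exact h
    · nlinarith [sq_nonneg z.re]
  rw [Complex.sq_norm, Complex.normSq_apply]
  simp only [Complex.add_re, Complex.add_im, Complex.mul_re, Complex.mul_im, Complex.ofReal_re,
    Complex.ofReal_im, hre0]
  rw [hre0] at hre
  linear_combination (-q ^ 2) * hre

lemma norm_embedding_add_mul {K : Type*} [Field K] [CharZero K] (φ : K →+* ℂ) {r : K} {m : ℚ}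
    (hm : m ≤ 0) (hr : r ^ 2 = algebraMap ℚ K m) (p q : ℚ) :
    ‖φ (algebraMap ℚ K p + algebraMap ℚ K q * r)‖ = √(p ^ 2 - m * q ^ 2) := by
  have hφr : φ r ^ 2 = ((m : ℝ) : ℂ) := by
    rw [← map_pow, hr, eq_ratCast, map_ratCast]
    norm_cast
  rw [← Complex.sq_norm_add_mul_of_sq_eq (by exact_mod_cast hm) hφr, Real.sqrt_sq (norm_nonneg _)]
  simp [eq_ratCast]

lemma intHeight_eq_of_forall_norm_eq {K : Type*} [Field K] [NumberField K] {α : K} {s : ℝ}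
    (hs : 1 ≤ s) (h : ∀ φ : K →+* ℂ, ‖φ α‖ = s) : intHeight α = s := by
  simp only [intHeight, h, max_eq_right hs, Finset.prod_const, Finset.card_univ,
    Embeddings.card]
  exact Real.pow_rpow_inv_natCast (by linarith) Module.finrank_pos.ne'

lemma intHeight_add_mul_eq_sqrt {K : Type*} [Field K] [NumberField K] {r : K} {m : ℚ}
    (hm : m ≤ 0) (hr : r ^ 2 = algebraMap ℚ K m) {p q : ℚ} (hpq : 1 ≤ (p : ℝ) ^ 2 - m * q ^ 2) :
    intHeight (algebraMap ℚ K p + algebraMap ℚ K q * r) = √((p : ℝ) ^ 2 - m * q ^ 2) :=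
  intHeight_eq_of_forall_norm_eq (Real.one_le_sqrt.mpr hpq) fun φ ↦ by
    simpa using norm_embedding_add_mul φ hm hr p q

lemma Real.half_mul_abs_four_mul_rpow_half (a : ℝ) :
    (1 / 2) * |4 * a| ^ ((1 : ℝ) / 2) = √|a| := by
  rw [abs_mul, abs_of_pos four_pos, ← Real.sqrt_eq_rpow, show (4 : ℝ) = 2 ^ 2 by norm_num,
    Real.sqrt_mul (by positivity), Real.sqrt_sq two_pos.le]
  ring

theorem statement1_general (m : ℤ) (hsf : Squarefree m) (hneg : m < 0) (hmod : m % 4 ≠ 1)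
    (L : Type*) [Field L] [NumberField L] (r : L) (hr : r ^ 2 = (m : L))
    (hgenL : IntermediateField.adjoin ℚ {r} = ⊤) :
    IsLeast {H : ℝ | ∃ α : 𝓞 L, IntermediateField.adjoin ℚ {(α : L)} = ⊤ ∧
        intHeight (α : L) = H}
      ((1 / 2) * |(4 * m : ℝ)| ^ ((1 : ℝ) / 2)) := by
  have hm : (m : ℚ) < 0 := by exact_mod_cast hneg
  have hm1 : (1 : ℝ) ≤ -m := by exact_mod_cast (by omega : (1 : ℤ) ≤ -m)
  have hr' : r ^ 2 = algebraMap ℚ L m := by rw [hr, map_intCast]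
  have hr_irr := notMem_range_algebraMap_of_sq_eq hm hr'
  have hL : Module.finrank ℚ L = 2 := finrank_eq_two_of_adjoin_eq_top hr_irr
    (by simpa only [map_zero, map_one, zero_add, one_mul] using aeval_add_mul_of_sq_eq hr' 0 1)
    hgenL
  rw [Real.half_mul_abs_four_mul_rpow_half, abs_of_neg (by exact_mod_cast hneg)]
  have hr_int : IsIntegral ℤ r := .of_pow two_pos (by rw [hr]; exact (m : 𝓞 L).isIntegral_coe)
  refine ⟨⟨⟨r, hr_int⟩, hgenL, ?_⟩, ?_⟩
  · show intHeight r = √(-m)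
    simpa using intHeight_add_mul_eq_sqrt hm.le hr' (p := 0) (q := 1) (by simpa using hm1)
  rintro _ ⟨α, hgen, rfl⟩
  obtain ⟨p, q, hα⟩ := exists_eq_add_mul_of_finrank_eq_two hr_irr hL α
  have hα_irr := notMem_range_algebraMap_of_adjoin_eq_top (by omega) hgen
  have hα_int : IsIntegral ℤ (α : L) := α.isIntegral_coe
  rw [hα] at hα_irr hα_int
  obtain ⟨c, rfl⟩ := hsf.exists_intCast_eq_of_isIntegral hmod hr' hα_irr hα_int
  have hc : c ≠ 0 := by
    rintro rfl
    exact hα_irr ⟨p, by simp⟩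
  have hc1 : (1 : ℝ) ≤ c ^ 2 := mod_cast (one_le_sq_iff_one_le_abs _).mpr (Int.one_le_abs hc)
  rw [hα, intHeight_add_mul_eq_sqrt hm.le hr' (by push_cast; nlinarith)]
  exact Real.sqrt_le_sqrt (by push_cast; nlinarith)

/-- For an imaginary quadratic field $L=\mathbb{Q}(\sqrt m)$ with $m$ squarefree, $m<0$,
$m\not\equiv 1\pmod 4$ (so $\Delta_L = 4m$), the minimum of the Weil height over integral
generators of $L$ is $\frac12|\Delta_L|^{1/2}$. -/
theorem statement1 (m : ℤ) (hsf : Squarefree m) (hneg : m < 0) (hmod : m % 4 ≠ 1)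
    (L : Type*) [Field L] [NumberField L] (r : L) (hr : r ^ 2 = (m : L))
    (hgenL : IntermediateField.adjoin ℚ {r} = ⊤)
    (hdisc : discr L = 4 * m) :
    IsLeast {H : ℝ | ∃ α : 𝓞 L, IntermediateField.adjoin ℚ {(α : L)} = ⊤ ∧
        intHeight (α : L) = H}
      ((1 / 2) * |(4 * m : ℝ)| ^ ((1 : ℝ) / 2)) :=
  statement1_general m hsf hneg hmod L r hr hgenL
end

section
/- Let K be a totally complex number field with at least two archimedean places, let w be an archimedean place with embedding σ_w, and let ξ ∈ O_K be nonzero with |ξ|_v < 1 for all archimedean v ≠ w. If k = Q(ξ) is a proper subfield of K, then K/k is a Galois extension of degree 2 and Aut(K/k) is generated by σ_w^{-1} ∘ ρ ∘ σ_w, where ρ is complex conjugation. -/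
open NumberField

/-!
Let `k = ℚ(ξ)`. Every complex embedding `φ` of `K` that agrees with `σ_w` on `k` takes the value
`σ_w ξ` at `ξ`, so the place it induces is `≥ 1` at `ξ`; since `ξ` is a nonzero integer, whose
norm has absolute value at least `1`, that place can only be `w`, i.e. `φ ∈ {σ_w, ρ σ_w}`.
Hence `K` has at most two `k`-embeddings into `ℂ`, so `[K : k] ≤ 2`, and `[K : k] = 2` as `k ≠ K`.
A quadratic extension in characteristic zero is Galois with group of order `2`, and its
non-trivial element `g` satisfies `σ_w g ≠ σ_w`, whence `σ_w g = ρ σ_w`.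
-/

open NumberField InfinitePlace ComplexEmbedding Module

namespace NumberField.InfinitePlace

variable {K : Type*} [Field K] [NumberField K]

theorem lt_one_of_placeNorm_lt_one {v : InfinitePlace K} {x : K} (h : placeNorm v x < 1) :
    v x < 1 := by
  have hexp : 0 < (v.mult : ℝ) / finrank ℚ K :=
    div_pos (Nat.cast_pos.mpr v.mult_pos) (Nat.cast_pos.mpr finrank_pos)
  exact not_le.mp fun h1 ↦ (Real.one_le_rpow h1 hexp.le).not_gt h

theorem eq_embedding_or_conjugate_of_apply_eq {w : InfinitePlace K} {ξ : 𝓞 K} (hξ : ξ ≠ 0)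
    (hsmall : ∀ v ≠ w, v (ξ : K) < 1) {φ : K →+* ℂ} (hφ : φ ξ = w.embedding ξ) :
    φ = w.embedding ∨ φ = conjugate w.embedding := by
  have hmk : mk φ = w := by
    by_contra hne
    have hlt := hsmall _ hne
    rw [apply, hφ, norm_embedding_eq] at hlt
    exact (one_le_of_lt_one hξ hsmall).not_gt hlt
  rw [← mk_embedding w, mk_eq_iff] at hmk
  exact hmk.imp id fun h ↦ by rw [← h]; exact (star_star φ).symm

end NumberField.InfinitePlace

theorem Algebra.IsQuadraticExtension.card_algEquiv (F K : Type*) [Field F] [Field K] [Algebra F K]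
    [Algebra.IsQuadraticExtension F K] [Algebra.IsSeparable F K] : Nat.card (K ≃ₐ[F] K) = 2 := by
  rw [IsGalois.card_aut_eq_finrank, finrank_eq_two]

namespace IntermediateField

variable {F K : Type*} [Field F] [Field K] [Algebra F K] [CharZero K]
  {k : IntermediateField F K} [FiniteDimensional k K] {σ : K →+* ℂ}

theorem finrank_le_two_of_forall_eq_or_eq_conjugate
    (h : ∀ φ : K →+* ℂ, (∀ x ∈ k, φ x = σ x) → φ = σ ∨ φ = conjugate σ) :
    finrank k K ≤ 2 := by
  let : Algebra k ℂ := (σ.comp (algebraMap k K)).toAlgebra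
  have hmem : ∀ φ : K →ₐ[k] ℂ, (φ : K →+* ℂ) ∈ ({σ, conjugate σ} : Set (K →+* ℂ)) :=
    fun φ ↦ h φ fun x hx ↦ φ.commutes ⟨x, hx⟩
  calc finrank k K = Nat.card (K →ₐ[k] ℂ) := by rw [Nat.card_eq_fintype_card, AlgHom.card]
    _ ≤ Nat.card ({σ, conjugate σ} : Set (K →+* ℂ)) :=
      Nat.card_le_card_of_injective (fun φ ↦ ⟨φ, hmem φ⟩)
        fun _ _ h ↦ AlgHom.coe_ringHom_injective (congrArg Subtype.val h)
    _ ≤ 2 := by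
      rw [Nat.card_coe_set_eq]
      exact (Set.ncard_insert_le _ _).trans (by rw [Set.ncard_singleton])

theorem finrank_eq_two_of_forall_eq_or_eq_conjugate
    (h : ∀ φ : K →+* ℂ, (∀ x ∈ k, φ x = σ x) → φ = σ ∨ φ = conjugate σ) (hk : k ≠ ⊤) :
    finrank k K = 2 := by
  have hle := finrank_le_two_of_forall_eq_or_eq_conjugate h
  have hne : finrank k K ≠ 1 := finrank_eq_one_iff_eq_top.not.mpr hk
  have hpos : 0 < finrank k K := finrank_pos
  omega

theorem exists_algEquiv_comp_eq_conjugate [Algebra.IsQuadraticExtension k K]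
    (h : ∀ φ : K →+* ℂ, (∀ x ∈ k, φ x = σ x) → φ = σ ∨ φ = conjugate σ) :
    ∃ g : K ≃ₐ[k] K, g ≠ 1 ∧ σ.comp g = conjugate σ := by
  have : Nontrivial (K ≃ₐ[k] K) := Finite.one_lt_card_iff_nontrivial.mp
    (Algebra.IsQuadraticExtension.card_algEquiv k K ▸ one_lt_two)
  obtain ⟨g, hg⟩ := exists_ne (1 : K ≃ₐ[k] K)
  refine ⟨g, hg, (h (σ.comp g) fun x hx ↦ congrArg σ (g.commutes ⟨x, hx⟩)).resolve_left ?_⟩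
  intro hσ
  exact hg (AlgEquiv.ext fun x ↦ σ.injective (RingHom.congr_fun hσ x))

end IntermediateField

open IntermediateField in
theorem statement7_general (K : Type*) [Field K] [NumberField K]
    (w : InfinitePlace K) (ξ : 𝓞 K) (hξ : ξ ≠ 0)
    (hsmall : ∀ v : InfinitePlace K, v ≠ w → placeNorm v (ξ : K) < 1)
    (hproper : IntermediateField.adjoin ℚ {(ξ : K)} ≠ ⊤) :
    IsGalois (↥(IntermediateField.adjoin ℚ {(ξ : K)})) K ∧
    Module.finrank (↥(IntermediateField.adjoin ℚ {(ξ : K)})) K = 2 ∧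
    ∃ g : K ≃ₐ[↥(IntermediateField.adjoin ℚ {(ξ : K)})] K,
      (∀ x : K, w.embedding (g x) = starRingEnd ℂ (w.embedding x)) ∧
      ∀ h : K ≃ₐ[↥(IntermediateField.adjoin ℚ {(ξ : K)})] K, h ∈ Subgroup.zpowers g := by
  have hemb (φ : K →+* ℂ) (hφ : ∀ x ∈ adjoin ℚ {(ξ : K)}, φ x = w.embedding x) :
      φ = w.embedding ∨ φ = conjugate w.embedding :=
    eq_embedding_or_conjugate_of_apply_eq hξ (fun v hv ↦ lt_one_of_placeNorm_lt_one (hsmall v hv))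
      (hφ _ (mem_adjoin_simple_self ℚ _))
  have hrank := finrank_eq_two_of_forall_eq_or_eq_conjugate hemb hproper
  have : Algebra.IsQuadraticExtension (adjoin ℚ {(ξ : K)}) K := ⟨hrank⟩
  obtain ⟨g, hg1, hgσ⟩ := exists_algEquiv_comp_eq_conjugate hemb
  exact ⟨inferInstance, hrank, g, RingHom.congr_fun hgσ, fun _ ↦
    mem_zpowers_of_prime_card (Algebra.IsQuadraticExtension.card_algEquiv _ K) hg1⟩

/-- Corollary 2.1: with $K, w, \xi$ as in Lemma 2.2 and $k=\mathbb{Q}(\xi)$ proper,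
$K/k$ is Galois of degree $2$ and $\mathrm{Aut}(K/k)$ is generated by
$\sigma_w^{-1}\rho\sigma_w$. -/
theorem statement7 (K : Type*) [Field K] [NumberField K]
    (htc : ∀ v : InfinitePlace K, v.IsComplex)
    (hcard : 2 ≤ Fintype.card (InfinitePlace K))
    (w : InfinitePlace K) (ξ : 𝓞 K) (hξ : ξ ≠ 0)
    (hsmall : ∀ v : InfinitePlace K, v ≠ w → placeNorm v (ξ : K) < 1)
    (hproper : IntermediateField.adjoin ℚ {(ξ : K)} ≠ ⊤) :
    IsGalois (↥(IntermediateField.adjoin ℚ {(ξ : K)})) K ∧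
    Module.finrank (↥(IntermediateField.adjoin ℚ {(ξ : K)})) K = 2 ∧
    ∃ g : K ≃ₐ[↥(IntermediateField.adjoin ℚ {(ξ : K)})] K,
      (∀ x : K, w.embedding (g x) = starRingEnd ℂ (w.embedding x)) ∧
      ∀ h : K ≃ₐ[↥(IntermediateField.adjoin ℚ {(ξ : K)})] K, h ∈ Subgroup.zpowers g :=
  statement7_general K w ξ hξ hsmall hproper
end

section
/- Let K be a number field such that c_K < min{H(α) : α ∈ O_K, K = Q(α)}. Then Tor(K^×) = {±1}, i.e., the only roots of unity in K are ±1. -/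
open NumberField

/-!
A root of unity `ζ ≠ ±1` has non-real image under every complex embedding, so `K` is totally
complex. Minkowski's convex body theorem then gives, for every `c > c_K`, a nonzero `θ ∈ 𝓞 K` with
`w θ < 1` at every infinite place `w` but one, `w₀`, and height `< c`. Such a `θ` generates `K`
unless its image at `w₀` is real; then the image of `ζ θ`, which has the same absolute values, is
not, so one of `θ`, `ζ θ` is a generator of height `< c`. Heights on `𝓞 K` have the Northcott
property, so the height attains a minimum on generators; by hypothesis it exceeds `c_K`, and
taking `c` to be this minimum gives a contradiction.
-/

open NumberField.InfinitePlace NumberField.mixedEmbedding MeasureTheory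
open scoped NNReal ENNReal Real

theorem Complex.eq_one_or_neg_one_of_pow_eq_one_of_conj_eq {z : ℂ} {n : ℕ} (hn : n ≠ 0)
    (hz : z ^ n = 1) (hc : (starRingEnd ℂ) z = z) : z = 1 ∨ z = -1 := by
  rw [Complex.conj_eq_iff_re] at hc
  have hre : z.re ^ n = 1 := by
    have : (z.re : ℂ) ^ n = 1 := by rw [hc, hz]
    exact_mod_cast this
  rcases pow_eq_one_iff_cases.mp hre with h | h | ⟨h, -⟩
  · exact absurd h hn
  · left; rw [← hc, h, Complex.ofReal_one]
  · right; rw [← hc, h, Complex.ofReal_neg, Complex.ofReal_one]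

namespace NumberField

variable {K : Type*} [Field K]

section RootsOfUnity

variable {x : K} {n : ℕ}

theorem conj_embedding_ne_of_pow_eq_one (hn : n ≠ 0) (hx : x ^ n = 1) (h₁ : x ≠ 1) (h₂ : x ≠ -1)
    (φ : K →+* ℂ) : (starRingEnd ℂ) (φ x) ≠ φ x := fun hc ↦ by
  have hφ : φ x ^ n = 1 := by rw [← map_pow, hx, map_one]
  rcases Complex.eq_one_or_neg_one_of_pow_eq_one_of_conj_eq hn hφ hc with h | h
  · exact h₁ (φ.injective (by rw [h, map_one]))
  · exact h₂ (φ.injective (by rw [h, map_neg, map_one]))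

theorem isTotallyComplex_of_pow_eq_one (hn : n ≠ 0) (hx : x ^ n = 1) (h₁ : x ≠ 1) (h₂ : x ≠ -1) :
    IsTotallyComplex K where
  isComplex w := not_isReal_iff_isComplex.mp fun hw ↦
    conj_embedding_ne_of_pow_eq_one hn hx h₁ h₂ w.embedding <| by
      simpa using RingHom.congr_fun (isReal_iff.mp hw) x

theorem InfinitePlace.apply_eq_one_of_pow_eq_one (hn : n ≠ 0) (hx : x ^ n = 1)
    (w : InfinitePlace K) : w x = 1 :=
  (pow_eq_one_iff_of_nonneg (apply_nonneg w x) hn).mp (by rw [← map_pow, hx, map_one])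

end RootsOfUnity

variable [NumberField K]

theorem prod_embeddings_eq_prod_pow_mult {M : Type*} [CommMonoid M] (f : InfinitePlace K → M) :
    ∏ φ : K →+* ℂ, f (InfinitePlace.mk φ) = ∏ w, f w ^ mult w := by
  classical
  rw [← Finset.prod_fiberwise Finset.univ InfinitePlace.mk (fun φ ↦ f (InfinitePlace.mk φ))]
  refine Finset.prod_congr rfl fun w _ ↦ ?_
  rw [Finset.prod_congr rfl fun φ hφ ↦ congrArg f (Finset.mem_filter.mp hφ).2, Finset.prod_const,
    card_filter_mk_eq]

theorem intHeight_eq_prod_infinitePlace (α : K) :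
    intHeight α = (∏ w : InfinitePlace K, max 1 (w α) ^ mult w) ^ (Module.finrank ℚ K : ℝ)⁻¹ := by
  simp only [intHeight, ← prod_embeddings_eq_prod_pow_mult (fun w ↦ max 1 (w α)), apply]

theorem intHeight_nonneg (α : K) : 0 ≤ intHeight α :=
  Real.rpow_nonneg (Finset.prod_nonneg fun _ _ ↦ zero_le_one.trans (le_max_left _ _)) _

theorem intHeight_mul_of_forall_apply_eq_one {ζ : K} (hζ : ∀ w : InfinitePlace K, w ζ = 1)
    (α : K) : intHeight (ζ * α) = intHeight α := by
  simp only [intHeight_eq_prod_infinitePlace, map_mul, hζ, one_mul]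

theorem intHeight_eq_of_infinitePlace_lt_one {w₀ : InfinitePlace K} {β : K}
    (h : ∀ w, w ≠ w₀ → w β < 1) :
    intHeight β = (max 1 (w₀ β) ^ mult w₀) ^ (Module.finrank ℚ K : ℝ)⁻¹ := by
  rw [intHeight_eq_prod_infinitePlace, Finset.prod_eq_single w₀
    (fun w _ hw ↦ by rw [max_eq_left (h w hw).le, one_pow]) (by simp)]

theorem norm_embedding_le_intHeight_pow (α : K) (φ : K →+* ℂ) :
    ‖φ α‖ ≤ intHeight α ^ Module.finrank ℚ K := by
  classical
  rw [intHeight, Real.rpow_inv_natCast_pow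
      (Finset.prod_nonneg fun _ _ ↦ zero_le_one.trans (le_max_left _ _)) Module.finrank_pos.ne',
    ← Finset.mul_prod_erase _ _ (Finset.mem_univ φ)]
  exact (le_max_right _ _).trans <| le_mul_of_one_le_right (zero_le_one.trans (le_max_left _ _))
    (Finset.one_le_prod fun _ _ ↦ le_max_left _ _)

theorem northcott_intHeight : Northcott fun α : 𝓞 K ↦ intHeight (α : K) where
  finite_le b := by
    refine ((Embeddings.finite_of_norm_le K ℂ (b ^ Module.finrank ℚ K)).preimage
      RingOfIntegers.coe_injective.injOn).subset fun α hα ↦ ⟨α.isIntegral_coe, fun φ ↦ ?_⟩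
    exact (norm_embedding_le_intHeight_pow _ φ).trans
      (pow_le_pow_left₀ (intHeight_nonneg _) hα _)

theorem minkowskiConst_eq_rpow : minkowskiConst K =
    ((2 / π) ^ nrComplexPlaces K * √|(discr K : ℝ)|) ^ (Module.finrank ℚ K : ℝ)⁻¹ := by
  rw [Real.mul_rpow (by positivity) (by positivity), ← Real.rpow_natCast,
    ← Real.rpow_mul (by positivity), Real.sqrt_eq_rpow, ← Real.rpow_mul (abs_nonneg _),
    minkowskiConst]
  ring_nf

open scoped Classical in
theorem minkowskiBound_one_of_isTotallyComplex [IsTotallyComplex K] :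
    minkowskiBound K ↑1 = ((2 ^ nrComplexPlaces K * NNReal.sqrt ‖discr K‖₊ : ℝ≥0) : ℝ≥0∞) := by
  rw [minkowskiBound, volume_fundamentalDomain_fractionalIdealLatticeBasis,
    volume_fundamentalDomain_latticeBasis, mixedEmbedding.finrank, IsTotallyComplex.finrank]
  simp only [Units.val_one, FractionalIdeal.absNorm_one, Rat.cast_one, ENNReal.ofReal_one, one_mul]
  push_cast
  rw [mul_right_comm, two_mul, pow_add, ← mul_assoc, ← mul_pow,
    ENNReal.inv_mul_cancel two_ne_zero ENNReal.ofNat_ne_top, one_pow, one_mul]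

theorem exists_ne_zero_infinitePlace_lt_of_isTotallyComplex [IsTotallyComplex K]
    (w₀ : InfinitePlace K) {r : ℝ} (hr : (2 / π) ^ nrComplexPlaces K * √|(discr K : ℝ)| < r) :
    ∃ θ : 𝓞 K, θ ≠ 0 ∧ (∀ w, w ≠ w₀ → w θ < 1) ∧ w₀ θ ^ 2 < r := by
  classical
  lift r to ℝ≥0 using (by positivity : (0 : ℝ) ≤ _).trans hr.le
  set R := NNReal.sqrt r
  have hrR : (r : ℝ) = (R : ℝ) ^ 2 := by rw [← NNReal.coe_pow, NNReal.sq_sqrt]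
  rw [hrR] at hr ⊢
  have hV : volume (convexBodyLT K fun w ↦ if w = w₀ then R else 1) =
      ((NNReal.pi ^ nrComplexPlaces K * R ^ 2 : ℝ≥0) : ℝ≥0∞) := by
    rw [convexBodyLT_volume, Finset.prod_eq_single w₀ (fun w _ hw ↦ by simp [hw]) (by simp)]
    simp [convexBodyLTFactor]
  have : minkowskiBound K ↑1 < volume (convexBodyLT K fun w ↦ if w = w₀ then R else 1) := by
    rw [minkowskiBound_one_of_isTotallyComplex, hV, ENNReal.coe_lt_coe, ← NNReal.coe_lt_coe]
    push_cast
    rw [Int.norm_eq_abs, NNReal.coe_real_pi]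
    calc (2 : ℝ) ^ nrComplexPlaces K * √|(discr K : ℝ)|
        = (2 / π) ^ nrComplexPlaces K * √|(discr K : ℝ)| * π ^ nrComplexPlaces K := by
          rw [div_pow]; field_simp
      _ < R ^ 2 * π ^ nrComplexPlaces K := by gcongr
      _ = π ^ nrComplexPlaces K * R ^ 2 := mul_comm _ _
  obtain ⟨θ, hθ, hlt⟩ := exists_ne_zero_mem_ringOfIntegers_lt K this
  refine ⟨θ, hθ, fun w hw ↦ by simpa [hw] using hlt w, ?_⟩
  exact pow_lt_pow_left₀ (by simpa using hlt w₀) (apply_nonneg _ _) two_ne_zero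

theorem adjoin_eq_top_of_infinitePlace_lt_of_conj_ne {w₀ : InfinitePlace K} {β : 𝓞 K}
    (hβ : β ≠ 0) (hlt : ∀ ⦃w⦄, w ≠ w₀ → w (β : K) < 1)
    (hconj : (starRingEnd ℂ) (w₀.embedding β) ≠ w₀.embedding β) :
    IntermediateField.adjoin ℚ {(β : K)} = ⊤ := by
  rw [Field.primitive_element_iff_algHom_eq_of_eval ℚ ℂ (fun _ ↦ IsAlgClosed.splits _) _
    w₀.embedding.toRatAlgHom]
  intro ψ hψ
  simp only [RingHom.toRatAlgHom_apply] at hψ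
  have hmk : w₀ = InfinitePlace.mk ψ.toRingHom := by
    have h := one_le_of_lt_one hβ hlt
    rw [← norm_embedding_eq, hψ] at h
    contrapose! h
    exact hlt h.symm
  rw [← mk_embedding w₀, mk_eq_iff] at hmk
  refine congr_arg RingHom.toRatAlgHom (hmk.resolve_right fun h ↦ hconj ?_)
  have := RingHom.congr_fun h β
  simp only [ComplexEmbedding.conjugate_coe_eq] at this
  exact this.trans hψ.symm

theorem adjoin_eq_top_or_adjoin_mul_eq_top {w₀ : InfinitePlace K} {ζ θ : 𝓞 K}
    (hζ : ∀ w : InfinitePlace K, w (ζ : K) = 1)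
    (hζconj : (starRingEnd ℂ) (w₀.embedding ζ) ≠ w₀.embedding ζ)
    (hθ : θ ≠ 0) (hlt : ∀ ⦃w⦄, w ≠ w₀ → w (θ : K) < 1) :
    IntermediateField.adjoin ℚ {(θ : K)} = ⊤ ∨
      IntermediateField.adjoin ℚ {((ζ * θ : 𝓞 K) : K)} = ⊤ := by
  have hζθ : ((ζ * θ : 𝓞 K) : K) = ζ * θ := map_mul _ ζ θ
  by_contra! h
  have hθconj := not_not.mp (mt (adjoin_eq_top_of_infinitePlace_lt_of_conj_ne hθ hlt) h.1)
  have hζθconj := not_not.mp (mt (adjoin_eq_top_of_infinitePlace_lt_of_conj_ne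
    (mul_ne_zero (fun h ↦ by simpa [h] using hζ w₀) hθ)
    (fun w hw ↦ by rw [hζθ, map_mul, hζ, one_mul]; exact hlt hw)) h.2)
  rw [hζθ, map_mul, map_mul, hθconj] at hζθconj
  refine hζconj (mul_right_cancel₀ ?_ hζθconj)
  simpa using hθ

theorem exists_adjoin_eq_top_intHeight_lt {x : K} {n : ℕ} (hn : n ≠ 0) (hx : x ^ n = 1)
    (h₁ : x ≠ 1) (h₂ : x ≠ -1) {c : ℝ} (hc : minkowskiConst K < c) :
    ∃ α : 𝓞 K, IntermediateField.adjoin ℚ {(α : K)} = ⊤ ∧ intHeight (α : K) < c := by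
  have := isTotallyComplex_of_pow_eq_one hn hx h₁ h₂
  obtain ⟨w₀⟩ : Nonempty (InfinitePlace K) := inferInstance
  have hd : (0 : ℝ) < Module.finrank ℚ K := Nat.cast_pos.mpr Module.finrank_pos
  rw [minkowskiConst_eq_rpow] at hc
  have hc0 : 0 ≤ c := (by positivity : (0 : ℝ) ≤ _).trans hc.le
  rw [Real.rpow_inv_lt_iff_of_pos (by positivity) hc0 hd] at hc
  obtain ⟨θ, hθ0, hθlt, hθ⟩ := exists_ne_zero_infinitePlace_lt_of_isTotallyComplex w₀ hc
  have hθheight : intHeight (θ : K) < c := by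
    rw [intHeight_eq_of_infinitePlace_lt_one hθlt, max_eq_right (one_le_of_lt_one hθ0 hθlt),
      IsTotallyComplex.mult_eq, Real.rpow_inv_lt_iff_of_pos (by positivity) hc0 hd]
    exact hθ
  let ζ : 𝓞 K := ⟨x, IsIntegral.of_pow (Nat.pos_of_ne_zero hn) (hx ▸ isIntegral_one)⟩
  have hζ : ∀ w : InfinitePlace K, w (ζ : K) = 1 := InfinitePlace.apply_eq_one_of_pow_eq_one hn hx
  rcases adjoin_eq_top_or_adjoin_mul_eq_top hζ
    (conj_embedding_ne_of_pow_eq_one hn hx h₁ h₂ _) hθ0 hθlt with h | h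
  · exact ⟨θ, h, hθheight⟩
  · refine ⟨ζ * θ, h, ?_⟩
    rwa [RingOfIntegers.coe_eq_algebraMap, map_mul, intHeight_mul_of_forall_apply_eq_one hζ]

end NumberField

/-- If $c_K$ is smaller than the height of every integral generator of $K$, then the
only roots of unity in $K$ are $\pm 1$. -/
theorem statement14 (K : Type*) [Field K] [NumberField K]
    (hmin : ∀ α : 𝓞 K, IntermediateField.adjoin ℚ {(α : K)} = ⊤ →
      minkowskiConst K < intHeight (α : K)) :
    ∀ x : K, (∃ n : ℕ, 0 < n ∧ x ^ n = 1) → x = 1 ∨ x = -1 := by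
  rintro x ⟨n, hn, hx⟩
  by_contra! h
  have hgen := fun c (hc : minkowskiConst K < c) ↦
    exists_adjoin_eq_top_intHeight_lt hn.ne' hx h.1 h.2 hc
  have := northcott_intHeight (K := K)
  obtain ⟨α, hα, hαmin⟩ := Northcott.exists_min_image (fun α : 𝓞 K ↦ intHeight (α : K))
    {α | IntermediateField.adjoin ℚ {(α : K)} = ⊤} ((hgen _ (lt_add_one _)).imp fun _ ↦ And.left)
  obtain ⟨β, hβ, hβα⟩ := hgen _ (hmin α hα)
  exact (hαmin β hβ).not_gt hβα
end
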